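/- arXiv:1804.10706 — 6 statements merged into one kernel-verified Lean document; each statement's English description precedes it below -/
import Mathlib

section
/- For any Riemannian manifold (M^n, g) with n ≥ 3, the tensor R̆_ij - |Rm|²/n g_ij, where R̆_ij = R_ipqr R_jpqr, equals W̆_ij - |W|²/n g_ij + 4/(n-2) W_ipjq R̊_pq + 2(n-4)/(n-2)² R̊_iq R̊_qj + 4R/(n(n-1)) R̊_ij - 2(n-4)/(n(n-2)²) |R̊ic|² g_ij, where W is the Weyl tensor, W̆_ij = W_ipqr W_jpqr, R̊ic is the traceless Ricci tensor, and R is the scalar curvature. -/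
/-!
Write `Rm = W + P ⊙ g`, with `⊙` the Kulkarni–Nomizu product and
`P = E / (n - 2) + R / (2n(n - 1)) g` the Schouten tensor, and expand `Rm̆` bilinearly.
Because `W` is trace-free, antisymmetric in its last pair and pair-symmetric, each of the two
mixed terms is `2 W_ipjq P_pq = 2 W_ipjq E_pq / (n - 2)`, while for symmetric `P` a direct
computation gives `(P ⊙ g)˘ = 2(n - 4) P² + 4 (tr P) P + 2 |P|² g`. Substituting `P`
(with `tr E = 0`) and taking trace-free parts, the pure-trace `R²` terms cancel.
-/

open Finset Matrix

namespace CurvatureTensor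

variable {ι : Type*}

def kulkarniNomizu (h k : Matrix ι ι ℝ) (i j l m : ι) : ℝ :=
  h i l * k j m + h j m * k i l - h i m * k j l - h j l * k i m

theorem kulkarniNomizu_antisymm_right (h k : Matrix ι ι ℝ) (i j l m : ι) :
    kulkarniNomizu h k i j l m = -kulkarniNomizu h k i j m l := by
  unfold kulkarniNomizu
  ring

theorem kulkarniNomizu_symm_pairs {h k : Matrix ι ι ℝ} (hh : h.IsSymm) (hk : k.IsSymm)
    (i j l m : ι) : kulkarniNomizu h k i j l m = kulkarniNomizu h k l m i j := by
  simp only [kulkarniNomizu, hh.apply, hk.apply]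
  ring

theorem eq_add_kulkarniNomizu_of_weyl_decomposition {Rm W : ι → ι → ι → ι → ℝ}
    {Ric E g : Matrix ι ι ℝ} {R N : ℝ} (hN0 : N ≠ 0) (hN1 : N - 1 ≠ 0) (hN2 : N - 2 ≠ 0)
    (hW : ∀ i j k l, Rm i j k l = W i j k l
      + (1 / (N - 2)) * (Ric i k * g j l + Ric j l * g i k - Ric i l * g j k - Ric j k * g i l)
      - (R / ((N - 1) * (N - 2))) * (g j l * g i k - g i l * g j k))
    (hE : ∀ i j, E i j = Ric i j - (R / N) * g i j) :
    Rm = W + kulkarniNomizu ((1 / (N - 2)) • E + (R / (2 * N * (N - 1))) • g) g := by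
  ext i j k l
  simp only [hW, kulkarniNomizu, hE, Pi.add_apply, Matrix.add_apply, Matrix.smul_apply,
    smul_eq_mul]
  field_simp
  ring

variable [Fintype ι]

def innerContraction (S T : ι → ι → ι → ι → ℝ) : Matrix ι ι ℝ :=
  of fun i j => ∑ p, ∑ q, ∑ r, S i p q r * T j p q r

def curvatureAction (W : ι → ι → ι → ι → ℝ) (h : Matrix ι ι ℝ) : Matrix ι ι ℝ :=
  of fun i j => ∑ p, ∑ q, W i p j q * h p q

structure IsWeylLike (W : ι → ι → ι → ι → ℝ) : Prop where
  antisymm_right : ∀ i j k l, W i j k l = -W i j l k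
  symm_pairs : ∀ i j k l, W i j k l = W k l i j
  ricci_eq_zero : ∀ i j, ∑ p, W i p j p = 0

theorem innerContraction_add_left (S S' T : ι → ι → ι → ι → ℝ) :
    innerContraction (S + S') T = innerContraction S T + innerContraction S' T := by
  ext i j
  simp [innerContraction, add_mul, sum_add_distrib]

theorem innerContraction_add_right (S T T' : ι → ι → ι → ι → ℝ) :
    innerContraction S (T + T') = innerContraction S T + innerContraction S T' := by
  ext i j
  simp [innerContraction, mul_add, sum_add_distrib]

theorem innerContraction_comm (S T : ι → ι → ι → ι → ℝ) :
    innerContraction S T = (innerContraction T S)ᵀ := by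
  ext i j
  simp [innerContraction, mul_comm]

theorem trace_innerContraction_self (T : ι → ι → ι → ι → ℝ) :
    (innerContraction T T).trace = ∑ a, ∑ b, ∑ c, ∑ d, T a b c d ^ 2 := by
  simp [innerContraction, trace, sq]

variable {W : ι → ι → ι → ι → ℝ}

theorem IsWeylLike.sum_apply_self_apply_eq_zero (hW : IsWeylLike W) (i j : ι) :
    ∑ p, W i p p j = 0 := by
  simp_rw [hW.antisymm_right i _ _ j, sum_neg_distrib, hW.ricci_eq_zero, neg_zero]

theorem curvatureAction_transpose (hW : IsWeylLike W) {h : Matrix ι ι ℝ} (hh : h.IsSymm) :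
    (curvatureAction W h)ᵀ = curvatureAction W h := by
  ext i j
  simp only [curvatureAction, transpose_apply, of_apply]
  rw [sum_comm]
  exact sum_congr rfl fun p _ => sum_congr rfl fun q _ => by rw [hW.symm_pairs, hh.apply]

theorem trace_curvatureAction (hW : IsWeylLike W) (h : Matrix ι ι ℝ) :
    (curvatureAction W h).trace = 0 := by
  have htrace : ∀ p q, ∑ i, W i p i q = 0 := fun p q => by
    simp_rw [hW.symm_pairs _ p _ q, hW.antisymm_right _ q _ p, hW.symm_pairs _ q p _]
    simp [hW.sum_apply_self_apply_eq_zero]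
  simp only [trace, curvatureAction, diag_apply, of_apply]
  rw [sum_comm]
  refine sum_eq_zero fun p _ => ?_
  rw [sum_comm]
  simp [← sum_mul, htrace]

variable [DecidableEq ι]

noncomputable def tracelessPart (A : Matrix ι ι ℝ) : Matrix ι ι ℝ :=
  A - (A.trace / Fintype.card ι) • 1

theorem tracelessPart_innerContraction_self_apply (T : ι → ι → ι → ι → ℝ) (i j : ι) :
    tracelessPart (innerContraction T T) i j
      = ∑ p, ∑ q, ∑ r, T i p q r * T j p q r
        - (∑ a, ∑ b, ∑ c, ∑ d, T a b c d ^ 2) / Fintype.card ι * (1 : Matrix ι ι ℝ) i j := by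
  rw [tracelessPart, Matrix.sub_apply, Matrix.smul_apply, trace_innerContraction_self,
    smul_eq_mul]
  rfl

theorem sum_kulkarniNomizu_one (h : Matrix ι ι ℝ) (u v : ι) :
    ∑ p, kulkarniNomizu h 1 u p v p
      = (Fintype.card ι - 2) * h u v + h.trace * (1 : Matrix ι ι ℝ) u v := by
  simp only [kulkarniNomizu, one_apply, mul_one, mul_ite, mul_zero, sum_sub_distrib,
    sum_add_distrib, sum_const, card_univ, nsmul_eq_mul, sum_ite_irrel, sum_ite_eq, sum_ite_eq',
    mem_univ, if_true, trace, diag_apply]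
  ring

theorem IsWeylLike.of_eq_add_kulkarniNomizu {T : ι → ι → ι → ι → ℝ}
    (hT_anti : ∀ i j k l, T i j k l = -T i j l k) (hT_symm : ∀ i j k l, T i j k l = T k l i j)
    {h : Matrix ι ι ℝ} (hh : h.IsSymm)
    (hT_ricci : ∀ i j, ∑ p, T i p j p
      = (Fintype.card ι - 2) * h i j + h.trace * (1 : Matrix ι ι ℝ) i j)
    (hTW : T = W + kulkarniNomizu h 1) : IsWeylLike W := by
  obtain rfl : W = T - kulkarniNomizu h 1 := eq_sub_of_add_eq hTW.symm
  refine ⟨fun i j k l => ?_, fun i j k l => ?_, fun i j => ?_⟩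
  · simp only [Pi.sub_apply]
    rw [hT_anti i j k l, kulkarniNomizu_antisymm_right h 1 i j k l]
    ring
  · simp only [Pi.sub_apply]
    rw [hT_symm, kulkarniNomizu_symm_pairs hh isSymm_one]
  · simp only [Pi.sub_apply, sum_sub_distrib, hT_ricci, sum_kulkarniNomizu_one, sub_self]

theorem innerContraction_kulkarniNomizu_one_right (hW : IsWeylLike W) (h : Matrix ι ι ℝ) :
    innerContraction W (kulkarniNomizu h 1) = (2 : ℝ) • curvatureAction W h := by
  ext i j
  have hricci : ∑ p, ∑ q, W i p q p * h j q = 0 := by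
    rw [sum_comm]
    simp [← sum_mul, hW.ricci_eq_zero]
  have hricci' : ∑ p, ∑ q, W i p p q * h j q = 0 := by
    rw [sum_comm]
    simp [← sum_mul, hW.sum_apply_self_apply_eq_zero]
  have hswap : ∀ p q, W i p q j = -W i p j q := fun p q => hW.antisymm_right i p q j
  simp only [innerContraction, curvatureAction, kulkarniNomizu, of_apply, Matrix.smul_apply,
    smul_eq_mul, one_apply, mul_ite, mul_one, mul_zero, mul_sub, mul_add, sum_sub_distrib,
    sum_add_distrib, sum_ite_eq, mem_univ, if_true, sum_ite_irrel, sum_const_zero, hricci,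
    hricci', hswap, neg_mul, sum_neg_distrib]
  ring

theorem innerContraction_kulkarniNomizu_one_self {h : Matrix ι ι ℝ} (hh : h.IsSymm) :
    innerContraction (kulkarniNomizu h 1) (kulkarniNomizu h 1)
      = (2 * ((Fintype.card ι : ℝ) - 4)) • (h * h) + (4 * h.trace) • h
        + (2 * (h * h).trace) • 1 := by
  ext i j
  simp only [innerContraction, kulkarniNomizu, of_apply, one_apply, mul_ite, mul_one, mul_zero,
    mul_sub, mul_add, sub_mul, add_mul, ite_mul, zero_mul, sum_sub_distrib, sum_add_distrib,
    sum_ite_eq, sum_ite_eq', mem_univ, if_true, sum_ite_irrel, sum_const_zero, sum_const,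
    card_univ, nsmul_eq_mul, hh.apply, trace, diag_apply, mul_apply, Matrix.add_apply,
    Matrix.smul_apply, smul_eq_mul]
  have hcomm : ∑ x, h j x * h i x = ∑ x, h i x * h j x := sum_congr rfl fun _ _ => mul_comm _ _
  simp only [hcomm, ← sum_mul, ← mul_sum]
  split_ifs <;> ring

theorem curvatureAction_add_smul_one (hW : IsWeylLike W) (h : Matrix ι ι ℝ) (a b : ℝ) :
    curvatureAction W (a • h + b • 1) = a • curvatureAction W h := by
  ext i j
  simp [curvatureAction, one_apply, mul_add, sum_add_distrib, mul_sum, ← sum_mul,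
    hW.ricci_eq_zero, mul_left_comm]

theorem innerContraction_add_kulkarniNomizu_one_self (hW : IsWeylLike W) {h : Matrix ι ι ℝ}
    (hh : h.IsSymm) :
    innerContraction (W + kulkarniNomizu h 1) (W + kulkarniNomizu h 1)
      = innerContraction W W + (4 : ℝ) • curvatureAction W h
        + (2 * ((Fintype.card ι : ℝ) - 4)) • (h * h) + (4 * h.trace) • h
        + (2 * (h * h).trace) • 1 := by
  rw [innerContraction_add_left, innerContraction_add_right, innerContraction_add_right,
    innerContraction_comm (kulkarniNomizu h 1) W, innerContraction_kulkarniNomizu_one_right hW,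
    transpose_smul, curvatureAction_transpose hW hh, innerContraction_kulkarniNomizu_one_self hh]
  module

theorem tracelessPart_innerContraction_add_kulkarniNomizu (hW : IsWeylLike W)
    {E : Matrix ι ι ℝ} (hE : E.IsSymm) (hE_trace : E.trace = 0) (a b : ℝ) :
    tracelessPart (innerContraction (W + kulkarniNomizu (a • E + b • 1) 1)
        (W + kulkarniNomizu (a • E + b • 1) 1))
      = tracelessPart (innerContraction W W) + (4 * a) • curvatureAction W E
        + (2 * ((Fintype.card ι : ℝ) - 4) * a ^ 2) • tracelessPart (E * E)
        + (8 * ((Fintype.card ι : ℝ) - 2) * a * b) • E := by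
  rw [innerContraction_add_kulkarniNomizu_one_self hW ((hE.smul a).add (isSymm_one.smul b)),
    curvatureAction_add_smul_one hW]
  ext i j
  have : Nonempty ι := ⟨i⟩
  have hcard : (Fintype.card ι : ℝ) ≠ 0 := Nat.cast_ne_zero.2 Fintype.card_ne_zero
  simp only [tracelessPart, mul_add, add_mul, Algebra.mul_smul_comm, Algebra.smul_mul_assoc,
    one_mul, mul_one, smul_add, mul_smul, trace_add, trace_smul, hE_trace, trace_one,
    trace_curvatureAction hW, smul_eq_mul, mul_zero, zero_add, add_zero, Matrix.sub_apply,
    Matrix.add_apply, Matrix.smul_apply]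
  field_simp
  ring

end CurvatureTensor

open CurvatureTensor

theorem weakly_einstein_defect_identity_general
    (n : ℕ) (hn : 3 ≤ n)
    (Rm W : Fin n → Fin n → Fin n → Fin n → ℝ)
    (Ric E : Fin n → Fin n → ℝ) (R : ℝ)
    (kd : Fin n → Fin n → ℝ)
    (hkd : ∀ i j, kd i j = if i = j then 1 else 0)
    (hRm2 : ∀ i j k l, Rm i j k l = - Rm i j l k)
    (hRm3 : ∀ i j k l, Rm i j k l = Rm k l i j)
    (hRic : ∀ i j, Ric i j = ∑ p : Fin n, Rm i p j p)
    (hR : R = ∑ i : Fin n, Ric i i)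
    (hW : ∀ i j k l, Rm i j k l = W i j k l
        + (1 / ((n : ℝ) - 2)) * (Ric i k * kd j l + Ric j l * kd i k
            - Ric i l * kd j k - Ric j k * kd i l)
        - (R / (((n : ℝ) - 1) * ((n : ℝ) - 2))) * (kd j l * kd i k - kd i l * kd j k))
    (hE : ∀ i j, E i j = Ric i j - (R / (n : ℝ)) * kd i j) :
    ∀ i j : Fin n,
      (∑ p : Fin n, ∑ q : Fin n, ∑ r : Fin n, Rm i p q r * Rm j p q r)
          - ((∑ a : Fin n, ∑ b : Fin n, ∑ c : Fin n, ∑ d : Fin n,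
              (Rm a b c d) ^ 2) / (n : ℝ)) * kd i j
        = (∑ p : Fin n, ∑ q : Fin n, ∑ r : Fin n, W i p q r * W j p q r)
          - ((∑ a : Fin n, ∑ b : Fin n, ∑ c : Fin n, ∑ d : Fin n,
              (W a b c d) ^ 2) / (n : ℝ)) * kd i j
          + (4 / ((n : ℝ) - 2)) * (∑ p : Fin n, ∑ q : Fin n, W i p j q * E p q)
          + (2 * ((n : ℝ) - 4) / ((n : ℝ) - 2) ^ 2) * (∑ q : Fin n, E i q * E q j)
          + (4 * R / ((n : ℝ) * ((n : ℝ) - 1))) * E i j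
          - (2 * ((n : ℝ) - 4) / ((n : ℝ) * ((n : ℝ) - 2) ^ 2))
              * (∑ a : Fin n, ∑ b : Fin n, (E a b) ^ 2) * kd i j := by
  -- At type `Matrix`, `1` is the identity matrix; at the function type it is constantly `1`.
  obtain rfl : @Eq (Matrix (Fin n) (Fin n) ℝ) kd 1 := ext fun i j => by rw [hkd, one_apply]
  have hn' : (3 : ℝ) ≤ n := by exact_mod_cast hn
  have hn0 : (n : ℝ) ≠ 0 := by positivity
  have hn1 : (n : ℝ) - 1 ≠ 0 := by linarith
  have hn2 : (n : ℝ) - 2 ≠ 0 := by linarith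
  have hE_symm : (of E).IsSymm := IsSymm.ext fun i j => by
    simp only [of_apply, hE, hRic, hRm3 i, isSymm_one.apply]
  have hE_trace : trace (of E) = 0 := by
    simp [trace, hE, sum_sub_distrib, ← hR, mul_div_cancel₀ _ hn0]
  have hE_sq : ∑ a, ∑ b, E a b ^ 2 = trace (of E * of E) := by
    simp [trace, mul_apply, sq, hE_symm.apply]
  have hRm_eq := eq_add_kulkarniNomizu_of_weyl_decomposition hn0 hn1 hn2 hW (E := of E) hE
  have hWeyl : IsWeylLike W := by
    refine .of_eq_add_kulkarniNomizu hRm2 hRm3 ((hE_symm.smul _).add (isSymm_one.smul _))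
      (fun i j => ?_) hRm_eq
    simp only [← hRic, trace_add, trace_smul, hE_trace, trace_one, Fintype.card_fin,
      Matrix.add_apply, Matrix.smul_apply, of_apply, hE, smul_eq_mul]
    field_simp
    ring
  subst hRm_eq
  intro i j
  have key := congrFun₂ (tracelessPart_innerContraction_add_kulkarniNomizu hWeyl hE_symm
    hE_trace (1 / ((n : ℝ) - 2)) (R / (2 * n * (n - 1)))) i j
  simp only [Matrix.add_apply, Matrix.smul_apply, smul_eq_mul] at key
  rw [tracelessPart_innerContraction_self_apply, tracelessPart_innerContraction_self_apply] at key
  simp only [Fintype.card_fin, tracelessPart, Matrix.sub_apply, Matrix.smul_apply, smul_eq_mul,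
    curvatureAction, of_apply, mul_apply] at key
  rw [hE_sq, key]
  field_simp
  ring

/-- Lemma: curvature identity for the weakly Einstein defect.
All tensors are expressed componentwise in an orthonormal frame at a point of
a Riemannian manifold `(Mⁿ, g)`, `n ≥ 3`. `Rm` is the Riemann curvature tensor
(with its standard symmetries), `Ric` its Ricci contraction, `R` the scalar
curvature, `W` the Weyl tensor (defined by the curvature decomposition),
`E = R̊ic` the traceless Ricci tensor, and `kd` the metric `g` (Kronecker delta
in an orthonormal frame). -/
theorem weakly_einstein_defect_identity
    (n : ℕ) (hn : 3 ≤ n)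
    (Rm W : Fin n → Fin n → Fin n → Fin n → ℝ)
    (Ric E : Fin n → Fin n → ℝ) (R : ℝ)
    (kd : Fin n → Fin n → ℝ)
    (hkd : ∀ i j, kd i j = if i = j then 1 else 0)
    (hRm1 : ∀ i j k l, Rm i j k l = - Rm j i k l)
    (hRm2 : ∀ i j k l, Rm i j k l = - Rm i j l k)
    (hRm3 : ∀ i j k l, Rm i j k l = Rm k l i j)
    (hRm4 : ∀ i j k l, Rm i j k l + Rm i k l j + Rm i l j k = 0)
    (hRic : ∀ i j, Ric i j = ∑ p : Fin n, Rm i p j p)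
    (hR : R = ∑ i : Fin n, Ric i i)
    (hW : ∀ i j k l, Rm i j k l = W i j k l
        + (1 / ((n : ℝ) - 2)) * (Ric i k * kd j l + Ric j l * kd i k
            - Ric i l * kd j k - Ric j k * kd i l)
        - (R / (((n : ℝ) - 1) * ((n : ℝ) - 2))) * (kd j l * kd i k - kd i l * kd j k))
    (hE : ∀ i j, E i j = Ric i j - (R / (n : ℝ)) * kd i j) :
    ∀ i j : Fin n,
      (∑ p : Fin n, ∑ q : Fin n, ∑ r : Fin n, Rm i p q r * Rm j p q r)
          - ((∑ a : Fin n, ∑ b : Fin n, ∑ c : Fin n, ∑ d : Fin n,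
              (Rm a b c d) ^ 2) / (n : ℝ)) * kd i j
        = (∑ p : Fin n, ∑ q : Fin n, ∑ r : Fin n, W i p q r * W j p q r)
          - ((∑ a : Fin n, ∑ b : Fin n, ∑ c : Fin n, ∑ d : Fin n,
              (W a b c d) ^ 2) / (n : ℝ)) * kd i j
          + (4 / ((n : ℝ) - 2)) * (∑ p : Fin n, ∑ q : Fin n, W i p j q * E p q)
          + (2 * ((n : ℝ) - 4) / ((n : ℝ) - 2) ^ 2) * (∑ q : Fin n, E i q * E q j)
          + (4 * R / ((n : ℝ) * ((n : ℝ) - 1))) * E i j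
          - (2 * ((n : ℝ) - 4) / ((n : ℝ) * ((n : ℝ) - 2) ^ 2))
              * (∑ a : Fin n, ∑ b : Fin n, (E a b) ^ 2) * kd i j :=
  weakly_einstein_defect_identity_general n hn Rm W Ric E R kd hkd hRm2 hRm3 hRic hR hW hE
end

section
/- Let (M^n, g, f) be a Miao-Tam critical metric. At any boundary point q ∈ ∂M with ∇f(q) ≠ 0, the gradient ∇f is an eigenvector of the Ricci tensor, i.e., Ric(∇f) = α ∇f for some real α. -/
/-- for a Miao-Tam critical metric, at any boundary point
`q ∈ ∂M` with `∇f(q) ≠ 0`, the gradient `∇f` is an eigenvector of the Ricci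
tensor. Stated componentwise in an orthonormal frame at `q`: `Ric` is the
(symmetric) Ricci tensor, `R = tr Ric`, `df ≠ 0` the gradient of `f`, `W` the
Weyl tensor (skew-symmetric in its last two indices), and `T` the auxiliary
tensor. Since `f = 0` on `∂M`, the identity `f C_ijk = T_ijk + W_ijkl ∇_l f`
gives `T_ijk = -W_ijkl ∇_l f` at `q`. -/
theorem gradient_is_ricci_eigenvector_on_boundary
    (n : ℕ) (hn : 3 ≤ n)
    (Ric : Fin n → Fin n → ℝ) (R : ℝ) (df : Fin n → ℝ)
    (W : Fin n → Fin n → Fin n → Fin n → ℝ)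
    (T : Fin n → Fin n → Fin n → ℝ)
    (kd : Fin n → Fin n → ℝ)
    (hkd : ∀ i j, kd i j = if i = j then 1 else 0)
    (hRicSym : ∀ i j, Ric i j = Ric j i)
    (hR : R = ∑ i : Fin n, Ric i i)
    (hdf : df ≠ 0)
    (hWskew : ∀ i j k l, W i j k l = - W i j l k)
    (hT : ∀ i j k, T i j k
        = (((n : ℝ) - 1) / ((n : ℝ) - 2)) * (Ric i k * df j - Ric j k * df i)
          - (R / ((n : ℝ) - 2)) * (kd i k * df j - kd j k * df i)
          + (1 / ((n : ℝ) - 2)) * (kd i k * (∑ s : Fin n, Ric j s * df s)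
              - kd j k * (∑ s : Fin n, Ric i s * df s)))
    (hTW : ∀ i j k, T i j k = - ∑ l : Fin n, W i j k l * df l) :
    ∃ α : ℝ, ∀ i : Fin n, (∑ j : Fin n, Ric i j * df j) = α * df i := by
  have h2 : (n : ℝ) - 2 ≠ 0 := by
    have h3 : (3 : ℝ) ≤ (n : ℝ) := by exact_mod_cast hn
    intro h; nlinarith
  set A : Fin n → ℝ := fun i => ∑ j, Ric i j * df j with hA
  -- contraction of W with df in its last two (skew) slots vanishes
  have hW0 : ∀ i j, (∑ k, ∑ l, W i j k l * df l * df k) = 0 := by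
    intro i j
    have key : (∑ k, ∑ l, W i j k l * df l * df k)
        = - (∑ k, ∑ l, W i j k l * df l * df k) := by
      calc (∑ k, ∑ l, W i j k l * df l * df k)
          = ∑ l, ∑ k, W i j k l * df l * df k := Finset.sum_comm
        _ = ∑ l, ∑ k, -(W i j l k * df k * df l) := by
            refine Finset.sum_congr rfl fun l _ => Finset.sum_congr rfl fun k _ => ?_
            rw [hWskew i j k l]; ring
        _ = - ∑ l, ∑ k, W i j l k * df k * df l := by
            simp
        _ = - (∑ k, ∑ l, W i j k l * df l * df k) := rfl
    linarith
  -- kd contraction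
  have hkdsum : ∀ (i : Fin n) (v : Fin n → ℝ), (∑ k, kd i k * v k) = v i := by
    intro i v
    simp [hkd, Finset.sum_ite_eq]
  -- key antisymmetry relation
  have hkey : ∀ i j, A i * df j = A j * df i := by
    intro i j
    have h0 : (∑ k, T i j k * df k) = 0 := by
      calc (∑ k, T i j k * df k)
          = ∑ k, (- ∑ l, W i j k l * df l) * df k := by
            refine Finset.sum_congr rfl fun k _ => ?_; rw [hTW]
        _ = - ∑ k, ∑ l, W i j k l * df l * df k := by
            simp [Finset.sum_mul, neg_mul]
        _ = 0 := by rw [hW0 i j]; ring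
    have e1 : (∑ k, T i j k * df k)
        = (((n : ℝ) - 1) / ((n : ℝ) - 2)) *
            (∑ k, (Ric i k * df j - Ric j k * df i) * df k)
          - (R / ((n : ℝ) - 2)) *
            (∑ k, (kd i k * df j - kd j k * df i) * df k)
          + (1 / ((n : ℝ) - 2)) *
            (∑ k, (kd i k * A j - kd j k * A i) * df k) := by
      rw [Finset.mul_sum, Finset.mul_sum, Finset.mul_sum,
        ← Finset.sum_sub_distrib, ← Finset.sum_add_distrib]
      refine Finset.sum_congr rfl fun k _ => ?_
      rw [hT]; simp only [hA]; ring
    have s1 : (∑ k, (Ric i k * df j - Ric j k * df i) * df k)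
        = A i * df j - A j * df i := by
      simp only [hA, Finset.sum_mul, ← Finset.sum_sub_distrib]
      refine Finset.sum_congr rfl fun k _ => ?_; ring
    have s2 : (∑ k, (kd i k * df j - kd j k * df i) * df k)
        = df i * df j - df j * df i := by
      have := hkdsum i df
      have := hkdsum j df
      calc (∑ k, (kd i k * df j - kd j k * df i) * df k)
          = (∑ k, kd i k * df k) * df j - (∑ k, kd j k * df k) * df i := by
            simp only [Finset.sum_mul, ← Finset.sum_sub_distrib]
            refine Finset.sum_congr rfl fun k _ => ?_; ring
        _ = df i * df j - df j * df i := by rw [hkdsum i df, hkdsum j df]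
    have s3 : (∑ k, (kd i k * A j - kd j k * A i) * df k)
        = df i * A j - df j * A i := by
      calc (∑ k, (kd i k * A j - kd j k * A i) * df k)
          = (∑ k, kd i k * df k) * A j - (∑ k, kd j k * df k) * A i := by
            simp only [Finset.sum_mul, ← Finset.sum_sub_distrib]
            refine Finset.sum_congr rfl fun k _ => ?_; ring
        _ = df i * A j - df j * A i := by rw [hkdsum i df, hkdsum j df]
    rw [h0, s1, s2, s3] at e1
    have hX : ((n : ℝ) - 2) * (A i * df j - A j * df i) = 0 := by
      field_simp at e1
      linear_combination -e1
    rcases mul_eq_zero.mp hX with h | h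
    · exact absurd h h2
    · linarith
  -- pick a coordinate where df ≠ 0
  obtain ⟨j0, hj0⟩ : ∃ j0, df j0 ≠ 0 := by
    by_contra h
    push_neg at h
    exact hdf (funext h)
  refine ⟨A j0 / df j0, fun i => ?_⟩
  rw [div_mul_eq_mul_div, eq_div_iff hj0]
  have := hkey i j0
  simp only [hA] at this ⊢
  linarith
end

section
/- Let (M^n, g, f) be a Miao-Tam critical metric. At any point of the boundary ∂M where ∇f ≠ 0, with e₁ = -∇f/|∇f| extended to an orthonormal frame, the auxiliary tensor satisfies |T_ijk|² = (2(n-1)²/(n-2)²) |R̊ic|² |∇f|² - (2n(n-1)/(n-2)²) R̊₁₁² |∇f|², where R̊₁₁ = R̊ic(e₁, e₁). -/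
/-- Lemma: norm of the auxiliary tensor on the boundary.
For a Miao-Tam critical metric, at a boundary point where `∇f ≠ 0`, in an
orthonormal frame `{e₁,…,eₙ}` with `e₁ = -∇f/|∇f|` (so `∇f = (-c,0,…,0)`
with `c = |∇f| > 0`; index `0 : Fin n` plays the role of `1`):
`|T|² = (2(n-1)²/(n-2)²)|R̊ic|²|∇f|² - (2n(n-1)/(n-2)²) R̊₁₁² |∇f|²`.
Here `Ric` is the symmetric Ricci tensor having `∇f` as eigenvector (so
`R_{1a} = 0` for `a ≠ 1`), `R = tr Ric`, `E = R̊ic` the traceless Ricci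
tensor, and `T` the auxiliary tensor. -/
theorem norm_aux_tensor_on_boundary
    (n : ℕ) (hn : 3 ≤ n)
    (o : Fin n)  -- the frame index of `e₁`
    (Ric E : Fin n → Fin n → ℝ) (R : ℝ) (df : Fin n → ℝ) (c : ℝ)
    (T : Fin n → Fin n → Fin n → ℝ)
    (kd : Fin n → Fin n → ℝ)
    (hkd : ∀ i j, kd i j = if i = j then 1 else 0)
    (hRicSym : ∀ i j, Ric i j = Ric j i)
    (hR : R = ∑ i : Fin n, Ric i i)
    (hE : ∀ i j, E i j = Ric i j - (R / (n : ℝ)) * kd i j)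
    (hc : 0 < c)
    (hdf0 : df o = -c)
    (hdfa : ∀ a : Fin n, a ≠ o → df a = 0)
    (heig : ∀ a : Fin n, a ≠ o → Ric o a = 0)
    (hT : ∀ i j k, T i j k
        = (((n : ℝ) - 1) / ((n : ℝ) - 2)) * (Ric i k * df j - Ric j k * df i)
          - (R / ((n : ℝ) - 2)) * (kd i k * df j - kd j k * df i)
          + (1 / ((n : ℝ) - 2)) * (kd i k * (∑ s : Fin n, Ric j s * df s)
              - kd j k * (∑ s : Fin n, Ric i s * df s))) :
    (∑ i : Fin n, ∑ j : Fin n, ∑ k : Fin n, (T i j k) ^ 2)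
      = (2 * ((n : ℝ) - 1) ^ 2 / ((n : ℝ) - 2) ^ 2)
          * (∑ i : Fin n, ∑ j : Fin n, (E i j) ^ 2) * c ^ 2
        - (2 * (n : ℝ) * ((n : ℝ) - 1) / ((n : ℝ) - 2) ^ 2)
            * (E o o) ^ 2 * c ^ 2 := by
  have hn3 : (3:ℝ) ≤ (n:ℝ) := by exact_mod_cast hn
  have hn2 : ((n:ℝ) - 2) ≠ 0 := by nlinarith
  have hn0 : (n:ℝ) ≠ 0 := by nlinarith
  set α : ℝ := ((n:ℝ) - 1) / ((n:ℝ) - 2) with hα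
  set μ : ℝ := (Ric o o - R) / ((n:ℝ) - 2) with hμ
  set P : Fin n → Fin n → ℝ := fun i k => α * Ric i k + μ * kd i k with hP
  have hkdoo : kd o o = 1 := by simp [hkd]
  have hkdsq : ∀ i j : Fin n, (kd i j) ^ 2 = kd i j := by
    intro i j; simp only [hkd]; split <;> norm_num
  have hdf : ∀ j, df j = -c * kd j o := by
    intro j
    rcases eq_or_ne j o with rfl | h
    · simp [hkd, hdf0]
    · simp [hkd, hdfa j h, h]
  have hRio : ∀ i, Ric i o = Ric o o * kd i o := by
    intro i
    rcases eq_or_ne i o with rfl | h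
    · simp [hkd]
    · simp [hkd, h, hRicSym i o, heig i h]
  have hsum : ∀ j, (∑ s : Fin n, Ric j s * df s) = -c * Ric o o * kd j o := by
    intro j
    have h1 : (∑ s : Fin n, Ric j s * df s) = Ric j o * df o := by
      apply Finset.sum_eq_single
      · intro b _ hb; rw [hdfa b hb]; ring
      · intro h; exact absurd (Finset.mem_univ o) h
    rw [h1, hdf0, hRio j]; ring
  have hTP : ∀ i j k, T i j k = -c * (P i k * kd j o - P j k * kd i o) := by
    intro i j k
    rw [hT, hsum, hsum, hdf, hdf]
    simp only [hP, hα, hμ]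
    field_simp
    ring
  have hTsq : ∀ i j k, (T i j k)^2
      = c^2 * ((P i k)^2 * kd j o - 2 * (P i k * P j k) * (kd i o * kd j o)
          + (P j k)^2 * kd i o) := by
    intro i j k
    rw [hTP]
    have e1 : (-c * (P i k * kd j o - P j k * kd i o))^2
        = c^2 * ((P i k)^2 * (kd j o)^2 - 2 * (P i k * P j k) * (kd i o * kd j o)
            + (P j k)^2 * (kd i o)^2) := by ring
    rw [e1, hkdsq, hkdsq]
  set S1 : ℝ := ∑ i : Fin n, ∑ k : Fin n, (P i k)^2 with hS1
  set S2 : ℝ := ∑ k : Fin n, (P o k)^2 with hS2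
  have hA : (∑ i : Fin n, ∑ j : Fin n, ∑ k : Fin n, (P i k)^2 * kd j o) = S1 := by
    rw [hS1]
    refine Finset.sum_congr rfl fun i _ => ?_
    simp only [← Finset.sum_mul]
    simp [hkd, mul_ite, mul_one, mul_zero, Finset.sum_ite_eq']
  have hB : (∑ i : Fin n, ∑ j : Fin n, ∑ k : Fin n, (P j k)^2 * kd i o) = S1 := by
    have h1 : ∀ i : Fin n, (∑ j : Fin n, ∑ k : Fin n, (P j k)^2 * kd i o)
        = S1 * kd i o := by
      intro i
      rw [hS1, Finset.sum_mul]
      refine Finset.sum_congr rfl fun j _ => ?_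
      rw [Finset.sum_mul]
    simp only [h1]
    simp [hkd, mul_ite, mul_one, mul_zero, Finset.sum_ite_eq']
  have hC : (∑ i : Fin n, ∑ j : Fin n, ∑ k : Fin n,
      2 * (P i k * P j k) * (kd i o * kd j o)) = 2 * S2 := by
    have h1 : ∀ i j : Fin n, (∑ k : Fin n, 2 * (P i k * P j k) * (kd i o * kd j o))
        = kd i o * (kd j o * (2 * ∑ k : Fin n, P i k * P j k)) := by
      intro i j
      rw [Finset.mul_sum, Finset.mul_sum, Finset.mul_sum]
      refine Finset.sum_congr rfl fun k _ => ?_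
      ring
    simp only [h1]
    have h2 : ∀ i : Fin n, (∑ j : Fin n, kd i o * (kd j o * (2 * ∑ k : Fin n, P i k * P j k)))
        = kd i o * (2 * ∑ k : Fin n, P i k * P o k) := by
      intro i
      rw [← Finset.mul_sum]
      congr 1
      simp [hkd, ite_mul, one_mul, zero_mul, Finset.sum_ite_eq']
    simp only [h2]
    simp only [hkd, ite_mul, one_mul, zero_mul, Finset.sum_ite_eq', Finset.mem_univ, if_true]
    rw [hS2]
    simp only [← pow_two]
  have key : (∑ i : Fin n, ∑ j : Fin n, ∑ k : Fin n, (T i j k) ^ 2)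
      = c^2 * (2 * S1 - 2 * S2) := by
    have h1 : (∑ i : Fin n, ∑ j : Fin n, ∑ k : Fin n, (T i j k) ^ 2)
        = ∑ i : Fin n, ∑ j : Fin n, ∑ k : Fin n,
            c^2 * ((P i k)^2 * kd j o - 2 * (P i k * P j k) * (kd i o * kd j o)
              + (P j k)^2 * kd i o) := by
      exact Finset.sum_congr rfl fun i _ => Finset.sum_congr rfl fun j _ =>
        Finset.sum_congr rfl fun k _ => hTsq i j k
    have h2 : (∑ i : Fin n, ∑ j : Fin n, ∑ k : Fin n,
            c^2 * ((P i k)^2 * kd j o - 2 * (P i k * P j k) * (kd i o * kd j o)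
              + (P j k)^2 * kd i o))
        = c^2 * ((∑ i : Fin n, ∑ j : Fin n, ∑ k : Fin n, (P i k)^2 * kd j o)
            - (∑ i : Fin n, ∑ j : Fin n, ∑ k : Fin n,
                2 * (P i k * P j k) * (kd i o * kd j o))
            + (∑ i : Fin n, ∑ j : Fin n, ∑ k : Fin n, (P j k)^2 * kd i o)) := by
      simp only [Finset.mul_sum, Finset.sum_sub_distrib, Finset.sum_add_distrib,
        mul_sub, mul_add]
    rw [h1, h2, hA, hB, hC]; ring
  rw [key]
  -- compute S1
  have hS1v : S1 = α^2 * (∑ i : Fin n, ∑ k : Fin n, (Ric i k)^2)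
      + 2*α*μ*R + (n:ℝ)*μ^2 := by
    rw [hS1, hR]
    have h1 : ∀ i : Fin n, (∑ k : Fin n, (P i k)^2)
        = α^2 * (∑ k : Fin n, (Ric i k)^2) + 2*α*μ*(Ric i i) + μ^2 := by
      intro i
      have h2 : ∀ k : Fin n, (P i k)^2
          = α^2 * (Ric i k)^2 + 2*α*μ*(Ric i k * kd i k) + μ^2 * (kd i k)^2 := by
        intro k; simp only [hP]; ring
      simp only [h2]
      rw [Finset.sum_add_distrib, Finset.sum_add_distrib]
      congr 1
      · congr 1
        · rw [Finset.mul_sum]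
        · rw [← Finset.mul_sum]
          congr 1
          simp [hkd, mul_ite, mul_one, mul_zero, Finset.sum_ite_eq]
      · rw [← Finset.mul_sum]
        simp [hkdsq, hkd, Finset.sum_ite_eq]
    simp only [h1]
    rw [Finset.sum_add_distrib, Finset.sum_add_distrib, ← Finset.mul_sum, ← Finset.mul_sum]
    simp only [Finset.sum_const, Finset.card_univ, Fintype.card_fin, nsmul_eq_mul] <;> ring
  -- compute S2
  have hS2v : S2 = (α * Ric o o + μ)^2 := by
    rw [hS2]
    have h1 : ∀ k : Fin n, (P o k)^2 = (α * Ric o o + μ)^2 * kd k o := by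
      intro k
      rcases eq_or_ne k o with rfl | h
      · simp [hP, hkd]
      · have h2 : Ric o k = 0 := heig k h
        simp [hP, hkd, h2, h, Ne.symm h]
    simp only [h1]
    simp [hkd, mul_ite, mul_one, mul_zero, Finset.sum_ite_eq']
  -- E norm
  have hEnorm : (∑ i : Fin n, ∑ j : Fin n, (Ric i j)^2)
      = (∑ i : Fin n, ∑ j : Fin n, (E i j)^2) + R^2/(n:ℝ) := by
    have h1 : ∀ i j : Fin n, (E i j)^2
        = (Ric i j)^2 - 2*(R/(n:ℝ))*(Ric i j * kd i j) + (R/(n:ℝ))^2 * (kd i j)^2 := by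
      intro i j; rw [hE]; ring
    have h2 : ∀ i : Fin n, (∑ j : Fin n, (E i j)^2)
        = (∑ j : Fin n, (Ric i j)^2) - 2*(R/(n:ℝ))*(Ric i i) + (R/(n:ℝ))^2 := by
      intro i
      simp only [h1]
      rw [Finset.sum_add_distrib, Finset.sum_sub_distrib]
      congr 1
      · congr 1
        rw [← Finset.mul_sum]
        congr 1
        simp [hkd, mul_ite, mul_one, mul_zero, Finset.sum_ite_eq]
      · rw [← Finset.mul_sum]
        simp [hkdsq, hkd, Finset.sum_ite_eq]
    simp only [h2]
    rw [Finset.sum_add_distrib, Finset.sum_sub_distrib, ← Finset.mul_sum, ← hR]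
    simp only [Finset.sum_const, Finset.card_univ, Fintype.card_fin, nsmul_eq_mul]
    field_simp
    ring
  have hEoo : E o o = Ric o o - R/(n:ℝ) := by rw [hE, hkdoo]; ring
  -- final algebra
  rw [hS1v, hS2v, hEnorm, hEoo, hα, hμ]
  generalize (∑ i : Fin n, ∑ j : Fin n, (E i j)^2) = Q
  generalize Ric o o = lam
  field_simp
  ring
end

section
/- Let (M^n, g, f) be a Miao-Tam critical metric. On the boundary ∂M (where ∇f ≠ 0), the auxiliary tensor T and the Weyl tensor satisfy |T_ijk|² = 2 |∇f|² |W^ν|², where W^ν_ij = W_{i1j1} and e₁ = -∇f/|∇f|. -/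
/-- for a Miao-Tam critical metric, on the boundary `∂M`
(where `∇f ≠ 0`), in an orthonormal frame with `e₁ = -∇f/|∇f|` (index `o`,
so `∇f = -c e₁` with `c = |∇f| > 0`): `|T|² = 2|∇f|²|Wᵛ|²`, where
`Wᵛ_ij = W_{i1j1}`. Here `Ric` is the symmetric Ricci tensor having `∇f` as
eigenvector, `R = tr Ric`, `W` the Weyl tensor (with curvature symmetries and
totally trace-free), `T` the auxiliary tensor, and — since `f = 0` on `∂M` —
the identity `f C_ijk = T_ijk + W_ijkl ∇_l f` gives `T_ijk = -W_ijkl ∇_l f`. -/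
theorem norm_aux_tensor_eq_weyl_nu
    (n : ℕ) (hn : 3 ≤ n)
    (o : Fin n)  -- the frame index of `e₁`
    (Ric : Fin n → Fin n → ℝ) (R : ℝ) (df : Fin n → ℝ) (c : ℝ)
    (W : Fin n → Fin n → Fin n → Fin n → ℝ)
    (T : Fin n → Fin n → Fin n → ℝ)
    (kd : Fin n → Fin n → ℝ)
    (hkd : ∀ i j, kd i j = if i = j then 1 else 0)
    (hRicSym : ∀ i j, Ric i j = Ric j i)
    (hR : R = ∑ i : Fin n, Ric i i)
    (hc : 0 < c)
    (hdf0 : df o = -c)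
    (hdfa : ∀ a : Fin n, a ≠ o → df a = 0)
    (heig : ∀ a : Fin n, a ≠ o → Ric o a = 0)
    (hW1 : ∀ i j k l, W i j k l = - W j i k l)
    (hW2 : ∀ i j k l, W i j k l = - W i j l k)
    (hW3 : ∀ i j k l, W i j k l = W k l i j)
    (hW4 : ∀ i j k l, W i j k l + W i k l j + W i l j k = 0)
    (hWtr : ∀ j l, ∑ i : Fin n, W i j i l = 0)
    (hT : ∀ i j k, T i j k
        = (((n : ℝ) - 1) / ((n : ℝ) - 2)) * (Ric i k * df j - Ric j k * df i)
          - (R / ((n : ℝ) - 2)) * (kd i k * df j - kd j k * df i)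
          + (1 / ((n : ℝ) - 2)) * (kd i k * (∑ s : Fin n, Ric j s * df s)
              - kd j k * (∑ s : Fin n, Ric i s * df s)))
    (hTW : ∀ i j k, T i j k = - ∑ l : Fin n, W i j k l * df l) :
    (∑ i : Fin n, ∑ j : Fin n, ∑ k : Fin n, (T i j k) ^ 2)
      = 2 * c ^ 2 * (∑ i : Fin n, ∑ j : Fin n, (W i o j o) ^ 2) := by
  -- Step 1: `T i j k = c * W i j k o` (only `l = o` survives in `hTW`)
  have L1 : ∀ i j k, T i j k = c * W i j k o := by
    intro i j k
    rw [hTW]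
    rw [Finset.sum_eq_single o (fun b _ hb => by rw [hdfa b hb]; ring)
      (fun h => absurd (Finset.mem_univ o) h)]
    rw [hdf0]; ring
  have hRico : ∀ a, a ≠ o → Ric a o = 0 := fun a ha => by
    rw [hRicSym]; exact heig a ha
  -- Step 2: `T i j k = 0` when `i ≠ o` and `j ≠ o`
  have L2 : ∀ i j k, i ≠ o → j ≠ o → T i j k = 0 := by
    intro i j k hi hj
    have hs : ∀ a : Fin n, a ≠ o → (∑ s : Fin n, Ric a s * df s) = 0 := by
      intro a ha
      rw [Finset.sum_eq_single o (fun b _ hb => by rw [hdfa b hb]; ring)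
        (fun h => absurd (Finset.mem_univ o) h)]
      rw [hRicSym, heig a ha]; ring
    rw [hT, hdfa i hi, hdfa j hj, hs i hi, hs j hj]; ring
  -- Hence `W i j k o = 0` for `i ≠ o`, `j ≠ o`
  have hW0 : ∀ i j k, i ≠ o → j ≠ o → W i j k o = 0 := by
    intro i j k hi hj
    have h := (L1 i j k).symm.trans (L2 i j k hi hj)
    exact (mul_eq_zero.mp h).resolve_left (ne_of_gt hc)
  have hWoo : ∀ i k, W o i k o = W i o k o → W o i k o = 0 → True := fun _ _ _ _ => trivial
  -- key combinatorial identity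
  have key : (∑ i : Fin n, ∑ j : Fin n, ∑ k : Fin n, (W i j k o) ^ 2)
      = 2 * ∑ i : Fin n, ∑ j : Fin n, (W i o j o) ^ 2 := by
    have hsplit : ∀ g : Fin n → ℝ,
        (∑ i : Fin n, g i) = g o + ∑ i ∈ Finset.univ.erase o, g i := by
      intro g
      rw [← Finset.sum_erase_add _ _ (Finset.mem_univ o)]; ring
    rw [hsplit (fun i => ∑ j : Fin n, ∑ k : Fin n, (W i j k o) ^ 2)]
    have h1st : (∑ j : Fin n, ∑ k : Fin n, (W o j k o) ^ 2)
        = ∑ j : Fin n, ∑ k : Fin n, (W j o k o) ^ 2 := by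
      refine Finset.sum_congr rfl fun j _ => Finset.sum_congr rfl fun k _ => ?_
      rw [hW1]; ring
    have h2nd : (∑ i ∈ Finset.univ.erase o, ∑ j : Fin n, ∑ k : Fin n, (W i j k o) ^ 2)
        = ∑ i : Fin n, ∑ k : Fin n, (W i o k o) ^ 2 := by
      have hinner : ∀ i : Fin n, i ≠ o →
          (∑ j : Fin n, ∑ k : Fin n, (W i j k o) ^ 2) = ∑ k : Fin n, (W i o k o) ^ 2 := by
        intro i hi
        refine Finset.sum_eq_single o (fun j _ hj => Finset.sum_eq_zero fun k _ => ?_)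
          (fun h => absurd (Finset.mem_univ o) h)
        rw [hW0 i j k hi hj]; ring
      have : (∑ i ∈ Finset.univ.erase o, ∑ j : Fin n, ∑ k : Fin n, (W i j k o) ^ 2)
          = ∑ i ∈ Finset.univ.erase o, ∑ k : Fin n, (W i o k o) ^ 2 :=
        Finset.sum_congr rfl fun i hi => hinner i (Finset.ne_of_mem_erase hi)
      rw [this, ← Finset.sum_erase_add _ _ (Finset.mem_univ o)]
      have : (∑ k : Fin n, (W o o k o) ^ 2) = 0 := by
        refine Finset.sum_eq_zero fun k _ => ?_
        have : W o o k o = 0 := by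
          have h := hW1 o o k o
          linarith
        rw [this]; ring
      rw [this]; ring
    rw [h1st, h2nd]; ring
  calc (∑ i : Fin n, ∑ j : Fin n, ∑ k : Fin n, (T i j k) ^ 2)
      = ∑ i : Fin n, ∑ j : Fin n, ∑ k : Fin n, c ^ 2 * (W i j k o) ^ 2 := by
        refine Finset.sum_congr rfl fun i _ => Finset.sum_congr rfl fun j _ =>
          Finset.sum_congr rfl fun k _ => ?_
        rw [L1]; ring
    _ = c ^ 2 * ∑ i : Fin n, ∑ j : Fin n, ∑ k : Fin n, (W i j k o) ^ 2 := by
        simp [Finset.mul_sum]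
    _ = 2 * c ^ 2 * (∑ i : Fin n, ∑ j : Fin n, (W i o j o) ^ 2) := by
        rw [key]; ring
end

section
/- Let (M^n, g, f), n ≥ 5, be a weakly Einstein Miao-Tam critical metric such that the Weyl tensor satisfies W|_{T∂M} = 0. Then on the boundary ∂M, with e₁ = -∇f/|∇f|, the identity (2R/(n-1)) R̊₁₁ = -((n²-6n+6)/(n-1)) |W^ν|² - ((n-4)/(n-2)) |R̊ic|² holds, where W^ν_ij = W_{i1j1}. -/
/-!
On the boundary `f = 0`, so `T_ijk = -W_ijkl ∇_l f = |∇f| W_ijk1`, while the explicit form of `T`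
expresses `T` through `Ric`. For tangent `a, b, c` this gives `W_abc1 = 0`; trace-freeness of `W`
together with `W|_{T∂M} = 0` gives `Wᵛ = 0`, so `W` vanishes at the boundary. The components
`T_1bc` then say `Ric = λ g + μ e₁ ⊗ e₁`, hence
`Rm = B (g ⊙ g)/2 + Q (e₁ ⊗ e₁) ⊙ g` with `Q = μ/(n-2)`. Comparing `|Rm(e_i, ·, ·, ·)|²` for `i = 1`
and for a tangent `i`, the weakly Einstein condition forces `Q (2B + Q) = 0`, that is
`μ ((2n-4) λ + (n-3) μ) = 0`, which is the claimed identity since `Wᵛ = 0` and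
`R̊ic = μ (e₁ ⊗ e₁ - g/n)`.
-/

open Finset

section FrameComponents

variable {ι : Type*} {W : ι → ι → ι → ι → ℝ} (o : ι)

theorem apply_normal_normal_eq_zero_of_trace [Fintype ι] [DecidableEq ι]
    (htr : ∀ b c, ∑ p, W b p c p = 0)
    (htan : ∀ a b c d, a ≠ o → b ≠ o → c ≠ o → d ≠ o → W a b c d = 0)
    {b c : ι} (hb : b ≠ o) (hc : c ≠ o) : W b o c o = 0 := by
  rw [← htr b c, ← add_sum_erase _ _ (mem_univ o),
    sum_eq_zero fun p hp => htan b p c p hb (ne_of_mem_erase hp) hc (ne_of_mem_erase hp),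
    add_zero]

theorem eq_zero_of_frame_components
    (h₁ : ∀ i j k l, W j i k l = -W i j k l) (h₂ : ∀ i j k l, W i j l k = -W i j k l)
    (h₃ : ∀ i j k l, W k l i j = W i j k l)
    (htan : ∀ a b c d, a ≠ o → b ≠ o → c ≠ o → d ≠ o → W a b c d = 0)
    (htan₃ : ∀ a b c, a ≠ o → b ≠ o → c ≠ o → W a b c o = 0)
    (hν : ∀ b c, b ≠ o → c ≠ o → W b o c o = 0) (i j k l : ι) : W i j k l = 0 := by
  have hlast : ∀ i j k, W i j k o = 0 := by
    intro i j k
    by_cases hk : k = o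
    · rw [hk]; linarith [h₂ i j o o]
    by_cases hi : i = o <;> by_cases hj : j = o
    · rw [hi, hj]; linarith [h₁ o o k o]
    · rw [hi, h₁ j o k o, hν j k hj hk, neg_zero]
    · rw [hj]; exact hν i k hi hk
    · exact htan₃ i j k hi hj hk
  by_cases hl : l = o
  · rw [hl]; exact hlast i j k
  by_cases hk : k = o
  · rw [hk, h₂ i j l o, hlast, neg_zero]
  by_cases hj : j = o
  · rw [hj, h₃ k l i o, hlast]
  by_cases hi : i = o
  · rw [hi, h₃ k l o j, h₂ k l j o, hlast, neg_zero]
  exact htan i j k l hi hj hk hl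

end FrameComponents

section Model

variable {n : ℕ} {kd : Fin n → Fin n → ℝ} {o : Fin n} {B Q : ℝ}

/-- `B (g ⊙ g)/2 + Q (e_o ⊗ e_o) ⊙ g`, with `⊙` the Kulkarni–Nomizu product. -/
def modelCurvature (kd : Fin n → Fin n → ℝ) (o : Fin n) (B Q : ℝ) (i j k l : Fin n) : ℝ :=
  B * (kd i k * kd j l - kd i l * kd j k)
    + Q * (kd i o * kd k o * kd j l + kd j o * kd l o * kd i k
      - kd i o * kd l o * kd j k - kd j o * kd k o * kd i l)

variable (kd) in
def IsWeaklyEinstein (Rm : Fin n → Fin n → Fin n → Fin n → ℝ) : Prop :=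
  ∀ i j, (∑ p, ∑ q, ∑ r, Rm i p q r * Rm j p q r)
    = ((∑ a, ∑ b, ∑ c, ∑ d, (Rm a b c d) ^ 2) / (n : ℝ)) * kd i j

theorem sum_sq_modelCurvature_normal (hkd : ∀ i j, kd i j = if i = j then 1 else 0) :
    ∑ p, ∑ q, ∑ r, modelCurvature kd o B Q o p q r ^ 2 = (2 * n - 2) * (B + Q) ^ 2 := by
  simp only [modelCurvature, hkd, sub_sq, add_sq, ite_pow, mul_ite, ite_mul,
    mul_one, zero_mul, mul_zero, sub_mul, mul_sub, add_mul, mul_add]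
  simp only [ne_eq, OfNat.ofNat_ne_zero, not_false_eq_true, zero_pow, ↓reduceIte, sum_add_distrib,
    sum_sub_distrib, sum_ite_eq, mem_univ, sum_ite_irrel, sum_const_zero, sum_ite_eq', sub_self,
    ite_self, add_zero, sub_zero, add_sub_cancel_right, sum_const, card_univ, Fintype.card_fin,
    nsmul_eq_mul]
  ring

theorem sum_sq_modelCurvature_tangent (hkd : ∀ i j, kd i j = if i = j then 1 else 0)
    {a : Fin n} (ha : a ≠ o) :
    ∑ p, ∑ q, ∑ r, modelCurvature kd o B Q a p q r ^ 2
      = (2 * n - 2) * B ^ 2 + 4 * B * Q + 2 * Q ^ 2 := by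
  simp only [modelCurvature, hkd, sub_sq, add_sq, ite_pow, mul_ite, ite_mul,
    mul_one, zero_mul, mul_zero, sub_mul, mul_sub, add_mul, mul_add]
  simp only [ne_eq, OfNat.ofNat_ne_zero, not_false_eq_true, zero_pow, ha, ↓reduceIte, ite_self,
    zero_add, sub_zero, add_zero, sum_add_distrib, sum_sub_distrib, sum_ite_eq, mem_univ,
    sum_ite_irrel, sum_const_zero, sum_ite_eq', zero_sub, sum_const, card_univ, Fintype.card_fin,
    nsmul_eq_mul, sub_neg_eq_add]
  ring

theorem IsWeaklyEinstein.mul_two_mul_add_eq_zero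
    (h : IsWeaklyEinstein kd (modelCurvature kd o B Q))
    (hkd : ∀ i j, kd i j = if i = j then 1 else 0) (hn : 2 < n) : Q * (2 * B + Q) = 0 := by
  obtain ⟨a, ha⟩ := Fintype.exists_ne_of_one_lt_card (by rw [Fintype.card_fin]; omega) o
  have hnormal := h o o
  have htangent := h a a
  simp only [← sq, hkd, if_pos, sum_sq_modelCurvature_normal hkd,
    sum_sq_modelCurvature_tangent hkd ha] at hnormal htangent
  have hprod : (2 * (n : ℝ) - 4) * (Q * (2 * B + Q)) = 0 := by
    linear_combination hnormal - htangent
  have hn3 : (3 : ℝ) ≤ n := by exact_mod_cast hn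
  exact (mul_eq_zero.1 hprod).resolve_left (by linarith : (0 : ℝ) < 2 * n - 4).ne'

end Model

section Curvature

variable {n : ℕ} {kd : Fin n → Fin n → ℝ} {Rm W : Fin n → Fin n → Fin n → Fin n → ℝ}
  {Ric : Fin n → Fin n → ℝ} {R : ℝ}

variable (kd Rm W Ric R) in
def IsWeylDecomposition : Prop :=
  ∀ i j k l, Rm i j k l = W i j k l
    + (1 / ((n : ℝ) - 2)) * (Ric i k * kd j l + Ric j l * kd i k
        - Ric i l * kd j k - Ric j k * kd i l)
    - (R / (((n : ℝ) - 1) * ((n : ℝ) - 2))) * (kd j l * kd i k - kd i l * kd j k)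

theorem kd_comm (hkd : ∀ i j, kd i j = if i = j then 1 else 0) (i j : Fin n) :
    kd i j = kd j i := by
  simp only [hkd, eq_comm]

theorem ricci_comm (hRm3 : ∀ i j k l, Rm i j k l = Rm k l i j)
    (hRic : ∀ i j, Ric i j = ∑ p, Rm i p j p) (i j : Fin n) : Ric i j = Ric j i := by
  rw [hRic, hRic]
  exact sum_congr rfl fun p _ => hRm3 i p j p

namespace IsWeylDecomposition

theorem antisymm_left (hW : IsWeylDecomposition kd Rm W Ric R)
    (hRm1 : ∀ i j k l, Rm i j k l = -Rm j i k l) (i j k l : Fin n) :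
    W j i k l = -W i j k l := by
  linear_combination hRm1 i j k l - hW i j k l - hW j i k l

theorem antisymm_right (hW : IsWeylDecomposition kd Rm W Ric R)
    (hRm2 : ∀ i j k l, Rm i j k l = -Rm i j l k) (i j k l : Fin n) :
    W i j l k = -W i j k l := by
  linear_combination hRm2 i j k l - hW i j k l - hW i j l k

theorem pair_comm (hW : IsWeylDecomposition kd Rm W Ric R)
    (hkd : ∀ i j, kd i j = if i = j then 1 else 0)
    (hRm3 : ∀ i j k l, Rm i j k l = Rm k l i j) (hRic : ∀ i j, Ric i j = Ric j i)
    (i j k l : Fin n) : W k l i j = W i j k l := by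
  have hswap := hW k l i j
  simp only [hRic k, hRic l, kd_comm hkd l, kd_comm hkd k] at hswap
  linear_combination hW i j k l - hswap - hRm3 i j k l

theorem trace_eq_zero (hW : IsWeylDecomposition kd Rm W Ric R)
    (hkd : ∀ i j, kd i j = if i = j then 1 else 0) (hn : 2 < n)
    (hRic : ∀ i j, Ric i j = ∑ p, Rm i p j p) (hR : R = ∑ i, Ric i i) (b c : Fin n) :
    ∑ p, W b p c p = 0 := by
  have hn1 : (n : ℝ) - 1 ≠ 0 := by
    rw [sub_ne_zero]; exact_mod_cast (by omega : n ≠ 1)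
  have hn2 : (n : ℝ) - 2 ≠ 0 := by
    rw [sub_ne_zero]; exact_mod_cast (by omega : n ≠ 2)
  have htrace := sum_congr rfl fun p (_ : p ∈ univ) => hW b p c p
  rw [← hRic] at htrace
  simp only [sum_add_distrib, sum_sub_distrib, ← mul_sum, hkd, one_div, ↓reduceIte, sum_const,
    card_univ, Fintype.card_fin, nsmul_eq_mul, mul_one, mul_ite, mul_zero, sum_ite_irrel, ← hR,
    sum_ite_eq', mem_univ, sum_ite_eq] at htrace
  have hprod : ((n : ℝ) - 1) * ((n : ℝ) - 2) * ∑ p, W b p c p = 0 := by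
    split_ifs at htrace <;> field_simp at htrace
    · linear_combination -((n : ℝ) - 1) * htrace
    · linear_combination -htrace
  simpa [hn1, hn2] using hprod

theorem eq_modelCurvature (hW : IsWeylDecomposition kd Rm W Ric R) (hn : 2 < n)
    (hflat : ∀ i j k l, W i j k l = 0) {o : Fin n} {L m : ℝ}
    (hRic : ∀ i j, Ric i j = L * kd i j + m * (kd i o * kd j o)) (hR : R = n * L + m) :
    Rm = modelCurvature kd o (((n - 2) * L - m) / ((n - 1) * (n - 2))) (m / (n - 2)) := by
  have hn1 : (n : ℝ) - 1 ≠ 0 := by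
    rw [sub_ne_zero]; exact_mod_cast (by omega : n ≠ 1)
  have hn2 : (n : ℝ) - 2 ≠ 0 := by
    rw [sub_ne_zero]; exact_mod_cast hn.ne'
  ext i j k l
  rw [hW, hflat, hRic, hRic, hRic, hRic, hR, modelCurvature]
  field_simp
  ring

theorem mul_coeff_eq_zero_of_isWeaklyEinstein (hW : IsWeylDecomposition kd Rm W Ric R)
    (hkd : ∀ i j, kd i j = if i = j then 1 else 0) (hn : 2 < n)
    (hflat : ∀ i j k l, W i j k l = 0) {o : Fin n} {L m : ℝ}
    (hRic : ∀ i j, Ric i j = L * kd i j + m * (kd i o * kd j o)) (hR : R = n * L + m)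
    (hWE : IsWeaklyEinstein kd Rm) : m * ((2 * n - 4) * L + (n - 3) * m) = 0 := by
  have hn1 : (n : ℝ) - 1 ≠ 0 := by
    rw [sub_ne_zero]; exact_mod_cast (by omega : n ≠ 1)
  have hn2 : (n : ℝ) - 2 ≠ 0 := by
    rw [sub_ne_zero]; exact_mod_cast hn.ne'
  rw [hW.eq_modelCurvature hn hflat hRic hR] at hWE
  have h := hWE.mul_two_mul_add_eq_zero hkd hn
  field_simp at h
  linear_combination h

end IsWeylDecomposition
end Curvature

section Boundary

variable {n : ℕ} {kd : Fin n → Fin n → ℝ} {W : Fin n → Fin n → Fin n → Fin n → ℝ}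
  {Ric : Fin n → Fin n → ℝ} {R c : ℝ} {df : Fin n → ℝ} {o : Fin n}

variable (kd Ric R df) in
/-- The tensor `T` of the paper, with `df` the frame components of `∇f`. -/
noncomputable def tensorT (i j k : Fin n) : ℝ :=
  (((n : ℝ) - 1) / ((n : ℝ) - 2)) * (Ric i k * df j - Ric j k * df i)
    - (R / ((n : ℝ) - 2)) * (kd i k * df j - kd j k * df i)
    + (1 / ((n : ℝ) - 2)) * (kd i k * (∑ s, Ric j s * df s) - kd j k * (∑ s, Ric i s * df s))

theorem sub_two_mul_weyl_apply_normal (hkd : ∀ i j, kd i j = if i = j then 1 else 0)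
    (hn : 2 < n) (hc : c ≠ 0) (hdf0 : df o = -c) (hdfa : ∀ a, a ≠ o → df a = 0)
    (hTW : ∀ i j k, tensorT kd Ric R df i j k = -∑ l, W i j k l * df l) (i j k : Fin n) :
    ((n : ℝ) - 2) * W i j k o
      = ((n : ℝ) - 1) * (Ric j k * kd i o - Ric i k * kd j o)
        + R * (kd i k * kd j o - kd j k * kd i o) + kd j k * Ric i o - kd i k * Ric j o := by
  have hn2 : (n : ℝ) - 2 ≠ 0 := by
    rw [sub_ne_zero]; exact_mod_cast hn.ne'
  have hdf : ∀ s, df s = -c * kd s o := fun s => by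
    by_cases hs : s = o
    · simp [hs, hdf0, hkd]
    · simp [hs, hdfa s hs, hkd]
  have hsum : ∀ v : Fin n → ℝ, ∑ s, v s * df s = -c * v o := fun v => by
    simp [hdf, hkd, mul_comm]
  have h := hTW i j k
  rw [tensorT, hsum, hsum, hsum, hdf, hdf] at h
  field_simp at h
  linear_combination -h

theorem weyl_apply_tangent_normal_eq_zero (hkd : ∀ i j, kd i j = if i = j then 1 else 0)
    (hn : 2 < n) (hc : c ≠ 0) (hdf0 : df o = -c) (hdfa : ∀ a, a ≠ o → df a = 0)
    (hsymm : ∀ i j, Ric i j = Ric j i) (heig : ∀ a, a ≠ o → Ric o a = 0)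
    (hTW : ∀ i j k, tensorT kd Ric R df i j k = -∑ l, W i j k l * df l)
    {a b d : Fin n} (ha : a ≠ o) (hb : b ≠ o) : W a b d o = 0 := by
  have hn2 : (n : ℝ) - 2 ≠ 0 := by
    rw [sub_ne_zero]; exact_mod_cast hn.ne'
  simpa [hkd, ha, hb, hsymm a o, hsymm b o, heig, hn2] using
    sub_two_mul_weyl_apply_normal hkd hn hc hdf0 hdfa hTW a b d

theorem ricci_apply_tangent_eq (hkd : ∀ i j, kd i j = if i = j then 1 else 0)
    (hn : 2 < n) (hc : c ≠ 0) (hdf0 : df o = -c) (hdfa : ∀ a, a ≠ o → df a = 0)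
    (hTW : ∀ i j k, tensorT kd Ric R df i j k = -∑ l, W i j k l * df l)
    (hν : ∀ a b, a ≠ o → b ≠ o → W o a b o = 0) {a b : Fin n} (ha : a ≠ o) (hb : b ≠ o) :
    Ric a b = (R - Ric o o) / ((n : ℝ) - 1) * kd a b := by
  have hn1 : (n : ℝ) - 1 ≠ 0 := by
    rw [sub_ne_zero]; exact_mod_cast (by omega : n ≠ 1)
  have h := sub_two_mul_weyl_apply_normal hkd hn hc hdf0 hdfa hTW o a b
  simp only [hν a b ha hb, mul_zero, hkd, ↓reduceIte, mul_one, ha, sub_zero, Ne.symm hb,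
    zero_sub, mul_neg, mul_ite, ite_mul, one_mul, zero_mul] at h
  rw [hkd]
  split_ifs at h ⊢ <;> field_simp <;> linarith

end Boundary

section Ricci

variable {n : ℕ} {kd : Fin n → Fin n → ℝ} {Ric : Fin n → Fin n → ℝ} {o : Fin n} {L m : ℝ}

theorem ricci_eq_of_tangent (hkd : ∀ i j, kd i j = if i = j then 1 else 0)
    (hsymm : ∀ i j, Ric i j = Ric j i) (heig : ∀ a, a ≠ o → Ric o a = 0)
    (htan : ∀ b c, b ≠ o → c ≠ o → Ric b c = L * kd b c) (i j : Fin n) :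
    Ric i j = L * kd i j + (Ric o o - L) * (kd i o * kd j o) := by
  by_cases hi : i = o <;> by_cases hj : j = o
  · simp [hi, hj, hkd]
  · simp [hi, hj, hkd, heig j hj, Ne.symm hj]
  · simp [hi, hj, hkd, hsymm i o, heig i hi]
  · simp [hi, hj, hkd, htan i j hi hj]

theorem sum_ricci_eq (hkd : ∀ i j, kd i j = if i = j then 1 else 0)
    (hRic : ∀ i j, Ric i j = L * kd i j + m * (kd i o * kd j o)) :
    ∑ i, Ric i i = n * L + m := by
  simp [hRic, hkd, sum_add_distrib]

theorem tracelessRicci_eq {E : Fin n → Fin n → ℝ} {R : ℝ} (hn : n ≠ 0)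
    (hRic : ∀ i j, Ric i j = L * kd i j + m * (kd i o * kd j o)) (hR : R = n * L + m)
    (hE : ∀ i j, E i j = Ric i j - R / n * kd i j) (i j : Fin n) :
    E i j = m * (kd i o * kd j o - kd i j / n) := by
  have hn0 : (n : ℝ) ≠ 0 := by exact_mod_cast hn
  rw [hE, hRic, hR]
  field_simp
  ring

theorem sum_sq_tracelessRicci (hkd : ∀ i j, kd i j = if i = j then 1 else 0) (hn : n ≠ 0) :
    ∑ i, ∑ j, (m * (kd i o * kd j o - kd i j / n)) ^ 2 = m ^ 2 * (n - 1) / n := by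
  simp only [hkd, mul_sub, sub_sq, mul_pow, ite_pow, mul_ite, ite_mul, mul_one, mul_zero,
    zero_mul, ne_eq, OfNat.ofNat_ne_zero, not_false_eq_true, zero_pow, ite_div, one_div,
    zero_div, sum_add_distrib, sum_sub_distrib, sum_ite_eq', mem_univ, ↓reduceIte,
    sum_ite_eq, sum_const, card_univ, Fintype.card_fin, nsmul_eq_mul]
  field_simp
  ring

theorem two_mul_scalar_mul_tracelessRicci_eq (hkd : ∀ i j, kd i j = if i = j then 1 else 0)
    (hn : 2 < n) {E : Fin n → Fin n → ℝ} {R : ℝ}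
    (hE : ∀ i j, E i j = m * (kd i o * kd j o - kd i j / n)) (hR : R = n * L + m)
    (hcoeff : m * ((2 * n - 4) * L + (n - 3) * m) = 0) :
    2 * R / ((n : ℝ) - 1) * E o o = -(((n : ℝ) - 4) / ((n : ℝ) - 2)) * ∑ i, ∑ j, E i j ^ 2 := by
  have hn1 : (n : ℝ) - 1 ≠ 0 := by
    rw [sub_ne_zero]; exact_mod_cast (by omega : n ≠ 1)
  have hn2 : (n : ℝ) - 2 ≠ 0 := by
    rw [sub_ne_zero]; exact_mod_cast hn.ne'
  simp only [hE, sum_sq_tracelessRicci hkd (by omega : n ≠ 0)]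
  rw [hR]
  simp only [hkd, if_pos]
  field_simp
  linear_combination (n : ℝ) * hcoeff

end Ricci

theorem weakly_einstein_boundary_identity_weyl_tangent_flat_general
    (n : ℕ) (hn : 5 ≤ n)
    (o : Fin n)  -- the frame index of `e₁`
    (Rm W : Fin n → Fin n → Fin n → Fin n → ℝ)
    (Ric E : Fin n → Fin n → ℝ) (R : ℝ) (df : Fin n → ℝ) (c : ℝ)
    (T : Fin n → Fin n → Fin n → ℝ)
    (kd : Fin n → Fin n → ℝ)
    (hkd : ∀ i j, kd i j = if i = j then 1 else 0)
    (hRm1 : ∀ i j k l, Rm i j k l = - Rm j i k l)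
    (hRm2 : ∀ i j k l, Rm i j k l = - Rm i j l k)
    (hRm3 : ∀ i j k l, Rm i j k l = Rm k l i j)
    (hRic : ∀ i j, Ric i j = ∑ p : Fin n, Rm i p j p)
    (hR : R = ∑ i : Fin n, Ric i i)
    (hW : ∀ i j k l, Rm i j k l = W i j k l
        + (1 / ((n : ℝ) - 2)) * (Ric i k * kd j l + Ric j l * kd i k
            - Ric i l * kd j k - Ric j k * kd i l)
        - (R / (((n : ℝ) - 1) * ((n : ℝ) - 2))) * (kd j l * kd i k - kd i l * kd j k))
    (hE : ∀ i j, E i j = Ric i j - (R / (n : ℝ)) * kd i j)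
    (hWE : ∀ i j, (∑ p : Fin n, ∑ q : Fin n, ∑ r : Fin n, Rm i p q r * Rm j p q r)
        = ((∑ a : Fin n, ∑ b : Fin n, ∑ c' : Fin n, ∑ d : Fin n,
            (Rm a b c' d) ^ 2) / (n : ℝ)) * kd i j)
    (hc : 0 < c)
    (hdf0 : df o = -c)
    (hdfa : ∀ a : Fin n, a ≠ o → df a = 0)
    (heig : ∀ a : Fin n, a ≠ o → Ric o a = 0)
    (hT : ∀ i j k, T i j k
        = (((n : ℝ) - 1) / ((n : ℝ) - 2)) * (Ric i k * df j - Ric j k * df i)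
          - (R / ((n : ℝ) - 2)) * (kd i k * df j - kd j k * df i)
          + (1 / ((n : ℝ) - 2)) * (kd i k * (∑ s : Fin n, Ric j s * df s)
              - kd j k * (∑ s : Fin n, Ric i s * df s)))
    (hTW : ∀ i j k, T i j k = - ∑ l : Fin n, W i j k l * df l)
    (hWtangent : ∀ a b c' d : Fin n,
        a ≠ o → b ≠ o → c' ≠ o → d ≠ o → W a b c' d = 0) :
    (2 * R / ((n : ℝ) - 1)) * E o o
      = -(((n : ℝ) ^ 2 - 6 * (n : ℝ) + 6) / ((n : ℝ) - 1))
            * (∑ i : Fin n, ∑ j : Fin n, (W i o j o) ^ 2)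
        - (((n : ℝ) - 4) / ((n : ℝ) - 2))
            * (∑ i : Fin n, ∑ j : Fin n, (E i j) ^ 2) := by
  have hn' : 2 < n := by omega
  have hRicc := ricci_comm hRm3 hRic
  replace hW : IsWeylDecomposition kd Rm W Ric R := hW
  have hTW' : ∀ i j k, tensorT kd Ric R df i j k = -∑ l, W i j k l * df l :=
    fun i j k => (hT i j k).symm.trans (hTW i j k)
  have hflat : ∀ i j k l, W i j k l = 0 :=
    eq_zero_of_frame_components o (hW.antisymm_left hRm1) (hW.antisymm_right hRm2)
      (hW.pair_comm hkd hRm3 hRicc) hWtangent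
      (fun _ _ _ ha hb _ =>
        weyl_apply_tangent_normal_eq_zero hkd hn' hc.ne' hdf0 hdfa hRicc heig hTW' ha hb)
      (fun _ _ => apply_normal_normal_eq_zero_of_trace o
        (hW.trace_eq_zero hkd hn' hRic hR) hWtangent)
  set L := (R - Ric o o) / ((n : ℝ) - 1)
  have hRicL := ricci_eq_of_tangent hkd hRicc heig (L := L) fun _ _ =>
    ricci_apply_tangent_eq hkd hn' hc.ne' hdf0 hdfa hTW' fun a b _ _ => hflat o a b o
  have hRL : R = n * L + (Ric o o - L) := hR.trans (sum_ricci_eq hkd hRicL)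
  have hcoeff := hW.mul_coeff_eq_zero_of_isWeaklyEinstein hkd hn' hflat hRicL hRL hWE
  have hWν : ∑ i, ∑ j, W i o j o ^ 2 = 0 := by simp [hflat]
  rw [hWν, mul_zero, zero_sub, ← neg_mul]
  exact two_mul_scalar_mul_tracelessRicci_eq hkd hn' (tracelessRicci_eq (by omega) hRicL hRL hE)
    hRL hcoeff

/-- for a weakly Einstein Miao-Tam critical metric of
dimension `n ≥ 5` whose Weyl tensor vanishes on directions tangent to the
boundary (`W_abcd = 0` for frame indices `a,b,c,d ≠ o` tangent to `∂M`), the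
following identity holds on `∂M`, in an orthonormal frame with
`e₁ = -∇f/|∇f|` (index `o`):
`(2R/(n-1)) R̊₁₁ = -((n²-6n+6)/(n-1))|Wᵛ|² - ((n-4)/(n-2))|R̊ic|²`,
where `Wᵛ_ij = W_{i1j1}`. Data as in the boundary identity: `Rm` is the
Riemann tensor, `Ric` its Ricci contraction with `∇f` as eigenvector, `R` the
scalar curvature, `W` the Weyl tensor, `E = R̊ic`, the weakly Einstein
condition holds, `T` is the auxiliary tensor and `T_ijk = -W_ijkl ∇_l f`
since `f = 0` on `∂M`. -/
theorem weakly_einstein_boundary_identity_weyl_tangent_flat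
    (n : ℕ) (hn : 5 ≤ n)
    (o : Fin n)  -- the frame index of `e₁`
    (Rm W : Fin n → Fin n → Fin n → Fin n → ℝ)
    (Ric E : Fin n → Fin n → ℝ) (R : ℝ) (df : Fin n → ℝ) (c : ℝ)
    (T : Fin n → Fin n → Fin n → ℝ)
    (kd : Fin n → Fin n → ℝ)
    (hkd : ∀ i j, kd i j = if i = j then 1 else 0)
    (hRm1 : ∀ i j k l, Rm i j k l = - Rm j i k l)
    (hRm2 : ∀ i j k l, Rm i j k l = - Rm i j l k)
    (hRm3 : ∀ i j k l, Rm i j k l = Rm k l i j)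
    (hRm4 : ∀ i j k l, Rm i j k l + Rm i k l j + Rm i l j k = 0)
    (hRic : ∀ i j, Ric i j = ∑ p : Fin n, Rm i p j p)
    (hR : R = ∑ i : Fin n, Ric i i)
    (hW : ∀ i j k l, Rm i j k l = W i j k l
        + (1 / ((n : ℝ) - 2)) * (Ric i k * kd j l + Ric j l * kd i k
            - Ric i l * kd j k - Ric j k * kd i l)
        - (R / (((n : ℝ) - 1) * ((n : ℝ) - 2))) * (kd j l * kd i k - kd i l * kd j k))
    (hE : ∀ i j, E i j = Ric i j - (R / (n : ℝ)) * kd i j)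
    (hWE : ∀ i j, (∑ p : Fin n, ∑ q : Fin n, ∑ r : Fin n, Rm i p q r * Rm j p q r)
        = ((∑ a : Fin n, ∑ b : Fin n, ∑ c' : Fin n, ∑ d : Fin n,
            (Rm a b c' d) ^ 2) / (n : ℝ)) * kd i j)
    (hc : 0 < c)
    (hdf0 : df o = -c)
    (hdfa : ∀ a : Fin n, a ≠ o → df a = 0)
    (heig : ∀ a : Fin n, a ≠ o → Ric o a = 0)
    (hT : ∀ i j k, T i j k
        = (((n : ℝ) - 1) / ((n : ℝ) - 2)) * (Ric i k * df j - Ric j k * df i)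
          - (R / ((n : ℝ) - 2)) * (kd i k * df j - kd j k * df i)
          + (1 / ((n : ℝ) - 2)) * (kd i k * (∑ s : Fin n, Ric j s * df s)
              - kd j k * (∑ s : Fin n, Ric i s * df s)))
    (hTW : ∀ i j k, T i j k = - ∑ l : Fin n, W i j k l * df l)
    (hWtangent : ∀ a b c' d : Fin n,
        a ≠ o → b ≠ o → c' ≠ o → d ≠ o → W a b c' d = 0) :
    (2 * R / ((n : ℝ) - 1)) * E o o
      = -(((n : ℝ) ^ 2 - 6 * (n : ℝ) + 6) / ((n : ℝ) - 1))
            * (∑ i : Fin n, ∑ j : Fin n, (W i o j o) ^ 2)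
        - (((n : ℝ) - 4) / ((n : ℝ) - 2))
            * (∑ i : Fin n, ∑ j : Fin n, (E i j) ^ 2) :=
  weakly_einstein_boundary_identity_weyl_tangent_flat_general n hn o Rm W Ric E R df c T kd hkd hRm1
    hRm2 hRm3 hRic hR hW hE hWE hc hdf0 hdfa heig hT hTW hWtangent
end

section
/- Let (M^n, g, f) be a Miao-Tam critical metric. On the boundary ∂M, the contraction of the Weyl tensor with the Ricci tensor and the gradient of f satisfies W_ipjq R_pq ∇_i f ∇_j f = -((n-2)/(2(n-1))) |T_ijk|², where T is the auxiliary tensor. -/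
/-- for a Miao-Tam critical metric, on the boundary `∂M`,
`W_ipjq R_pq ∇_i f ∇_j f = -((n-2)/(2(n-1))) |T|²`, where `T` is the
auxiliary tensor. Componentwise in an orthonormal frame at a boundary point:
`Ric` is the symmetric Ricci tensor, `R = tr Ric`, `df` the gradient of `f`,
`W` the Weyl tensor (with its curvature symmetries and totally trace-free),
`T` the auxiliary tensor, and — since `f = 0` on `∂M` — the identity
`f C_ijk = T_ijk + W_ijkl ∇_l f` gives `T_ijk = -W_ijkl ∇_l f`. -/
theorem weyl_ricci_gradient_contraction_on_boundary
    (n : ℕ) (hn : 3 ≤ n)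
    (Ric : Fin n → Fin n → ℝ) (R : ℝ) (df : Fin n → ℝ)
    (W : Fin n → Fin n → Fin n → Fin n → ℝ)
    (T : Fin n → Fin n → Fin n → ℝ)
    (kd : Fin n → Fin n → ℝ)
    (hkd : ∀ i j, kd i j = if i = j then 1 else 0)
    (hRicSym : ∀ i j, Ric i j = Ric j i)
    (hR : R = ∑ i : Fin n, Ric i i)
    (hW1 : ∀ i j k l, W i j k l = - W j i k l)
    (hW2 : ∀ i j k l, W i j k l = - W i j l k)
    (hW3 : ∀ i j k l, W i j k l = W k l i j)
    (hW4 : ∀ i j k l, W i j k l + W i k l j + W i l j k = 0)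
    (hWtr : ∀ j l, ∑ i : Fin n, W i j i l = 0)
    (hT : ∀ i j k, T i j k
        = (((n : ℝ) - 1) / ((n : ℝ) - 2)) * (Ric i k * df j - Ric j k * df i)
          - (R / ((n : ℝ) - 2)) * (kd i k * df j - kd j k * df i)
          + (1 / ((n : ℝ) - 2)) * (kd i k * (∑ s : Fin n, Ric j s * df s)
              - kd j k * (∑ s : Fin n, Ric i s * df s)))
    (hTW : ∀ i j k, T i j k = - ∑ l : Fin n, W i j k l * df l) :
    (∑ i : Fin n, ∑ p : Fin n, ∑ j : Fin n, ∑ q : Fin n,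
        W i p j q * Ric p q * df i * df j)
      = -(((n : ℝ) - 2) / (2 * ((n : ℝ) - 1)))
          * (∑ i : Fin n, ∑ j : Fin n, ∑ k : Fin n, (T i j k) ^ 2) := by
  have hn3 : (3 : ℝ) ≤ (n : ℝ) := by exact_mod_cast hn
  have hn2 : ((n : ℝ) - 2) ≠ 0 := by linarith
  have hn1 : ((n : ℝ) - 1) ≠ 0 := by linarith
  -- skew symmetry of T in the first two indices
  have hskew : ∀ i j k, T i j k = - T j i k := by
    intro i j k; rw [hT, hT]; ring
  -- trace of T on first and third indices vanishes
  have htrace : ∀ j : Fin n, (∑ i, T i j i) = 0 := by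
    intro j
    calc (∑ i, T i j i) = ∑ i, -∑ l, W i j i l * df l :=
          Finset.sum_congr rfl fun i _ => hTW i j i
      _ = -∑ i, ∑ l, W i j i l * df l := by rw [Finset.sum_neg_distrib]
      _ = -∑ l, ∑ i, W i j i l * df l := by rw [Finset.sum_comm]
      _ = -∑ l, (∑ i, W i j i l) * df l := by
          simp only [Finset.sum_mul]
      _ = 0 := by simp [hWtr]
  -- trace of T on second and third indices vanishes
  have htrace' : ∀ i : Fin n, (∑ j, T i j j) = 0 := by
    intro i
    calc (∑ j, T i j j) = ∑ j, -T j i j :=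
          Finset.sum_congr rfl fun j _ => hskew i j j
      _ = -∑ j, T j i j := by rw [Finset.sum_neg_distrib]
      _ = 0 := by rw [htrace i]; ring
  -- abbreviations
  set S : ℝ := ∑ i : Fin n, ∑ p : Fin n, ∑ j : Fin n, ∑ q : Fin n,
      W i p j q * Ric p q * df i * df j with hS
  -- the key contraction: ∑ T_ijk Ric_ik df_j = -S
  have hP1 : (∑ i, ∑ j, ∑ k, T i j k * Ric i k * df j) = -S := by
    have step0 : ∀ i j k : Fin n,
        T i j k * Ric i k * df j = ∑ l, -(W i j k l * df l * Ric i k * df j) := by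
      intro i j k
      rw [hTW i j k, neg_mul, neg_mul, Finset.sum_mul, Finset.sum_mul,
        ← Finset.sum_neg_distrib]
    have step1 : ∀ i j k l : Fin n,
        W i j k l * df l * Ric i k * df j = W j i l k * Ric i k * df j * df l := by
      intro i j k l
      rw [hW1 i j k l, hW2 j i k l]; ring
    calc (∑ i, ∑ j, ∑ k, T i j k * Ric i k * df j)
        = ∑ i, ∑ j, ∑ k, ∑ l, -(W i j k l * df l * Ric i k * df j) := by
          exact Finset.sum_congr rfl fun i _ => Finset.sum_congr rfl fun j _ =>
            Finset.sum_congr rfl fun k _ => step0 i j k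
      _ = -∑ i, ∑ j, ∑ k, ∑ l, W i j k l * df l * Ric i k * df j := by
          simp only [Finset.sum_neg_distrib]
      _ = -∑ i, ∑ j, ∑ k, ∑ l, W j i l k * Ric i k * df j * df l := by
          refine congrArg Neg.neg ?_
          exact Finset.sum_congr rfl fun i _ => Finset.sum_congr rfl fun j _ =>
            Finset.sum_congr rfl fun k _ => Finset.sum_congr rfl fun l _ => step1 i j k l
      _ = -∑ j, ∑ i, ∑ k, ∑ l, W j i l k * Ric i k * df j * df l := by
          rw [Finset.sum_comm]
      _ = -∑ j, ∑ i, ∑ l, ∑ k, W j i l k * Ric i k * df j * df l := by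
          refine congrArg Neg.neg ?_
          exact Finset.sum_congr rfl fun j _ => Finset.sum_congr rfl fun i _ =>
            Finset.sum_comm
      _ = -S := rfl
  -- the mirror contraction
  have hP2 : (∑ i, ∑ j, ∑ k, T i j k * Ric j k * df i)
      = -(∑ i, ∑ j, ∑ k, T i j k * Ric i k * df j) := by
    calc (∑ i, ∑ j, ∑ k, T i j k * Ric j k * df i)
        = ∑ j, ∑ i, ∑ k, T i j k * Ric j k * df i := Finset.sum_comm
      _ = ∑ j, ∑ i, ∑ k, -(T j i k * Ric j k * df i) := by
          refine Finset.sum_congr rfl fun j _ => Finset.sum_congr rfl fun i _ =>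
            Finset.sum_congr rfl fun k _ => ?_
          rw [hskew i j k]; ring
      _ = -(∑ j, ∑ i, ∑ k, T j i k * Ric j k * df i) := by
          simp only [Finset.sum_neg_distrib]
  -- the four vanishing contractions
  have hQ1 : (∑ i, ∑ j, ∑ k, T i j k * kd i k * df j) = 0 := by
    have h1 : ∀ i j : Fin n, (∑ k, T i j k * kd i k * df j) = T i j i * df j := by
      intro i j; simp [hkd]
    calc (∑ i, ∑ j, ∑ k, T i j k * kd i k * df j)
        = ∑ i, ∑ j, T i j i * df j :=
          Finset.sum_congr rfl fun i _ => Finset.sum_congr rfl fun j _ => h1 i j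
      _ = ∑ j, ∑ i, T i j i * df j := Finset.sum_comm
      _ = ∑ j, (∑ i, T i j i) * df j := by simp only [Finset.sum_mul]
      _ = 0 := by simp [htrace]
  have hQ2 : (∑ i, ∑ j, ∑ k, T i j k * kd j k * df i) = 0 := by
    have h1 : ∀ i j : Fin n, (∑ k, T i j k * kd j k * df i) = T i j j * df i := by
      intro i j; simp [hkd]
    calc (∑ i, ∑ j, ∑ k, T i j k * kd j k * df i)
        = ∑ i, ∑ j, T i j j * df i :=
          Finset.sum_congr rfl fun i _ => Finset.sum_congr rfl fun j _ => h1 i j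
      _ = ∑ i, (∑ j, T i j j) * df i := by simp only [Finset.sum_mul]
      _ = 0 := by simp [htrace']
  have hU1 : (∑ i, ∑ j, ∑ k, T i j k * kd i k * (∑ s, Ric j s * df s)) = 0 := by
    have h1 : ∀ i j : Fin n,
        (∑ k, T i j k * kd i k * (∑ s, Ric j s * df s))
          = T i j i * (∑ s, Ric j s * df s) := by
      intro i j; simp [hkd]
    calc (∑ i, ∑ j, ∑ k, T i j k * kd i k * (∑ s, Ric j s * df s))
        = ∑ i, ∑ j, T i j i * (∑ s, Ric j s * df s) :=
          Finset.sum_congr rfl fun i _ => Finset.sum_congr rfl fun j _ => h1 i j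
      _ = ∑ j, ∑ i, T i j i * (∑ s, Ric j s * df s) := Finset.sum_comm
      _ = ∑ j, (∑ i, T i j i) * (∑ s, Ric j s * df s) := by simp only [Finset.sum_mul]
      _ = 0 := by simp [htrace]
  have hU2 : (∑ i, ∑ j, ∑ k, T i j k * kd j k * (∑ s, Ric i s * df s)) = 0 := by
    have h1 : ∀ i j : Fin n,
        (∑ k, T i j k * kd j k * (∑ s, Ric i s * df s))
          = T i j j * (∑ s, Ric i s * df s) := by
      intro i j; simp [hkd]
    calc (∑ i, ∑ j, ∑ k, T i j k * kd j k * (∑ s, Ric i s * df s))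
        = ∑ i, ∑ j, T i j j * (∑ s, Ric i s * df s) :=
          Finset.sum_congr rfl fun i _ => Finset.sum_congr rfl fun j _ => h1 i j
      _ = ∑ i, (∑ j, T i j j) * (∑ s, Ric i s * df s) := by simp only [Finset.sum_mul]
      _ = 0 := by simp [htrace']
  -- pointwise expansion of |T|^2
  have hpt : ∀ i j k : Fin n, (T i j k) ^ 2
      = (((n : ℝ) - 1) / ((n : ℝ) - 2)) * (T i j k * Ric i k * df j)
        - (((n : ℝ) - 1) / ((n : ℝ) - 2)) * (T i j k * Ric j k * df i)
        - (R / ((n : ℝ) - 2)) * (T i j k * kd i k * df j)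
        + (R / ((n : ℝ) - 2)) * (T i j k * kd j k * df i)
        + (1 / ((n : ℝ) - 2)) * (T i j k * kd i k * (∑ s, Ric j s * df s))
        - (1 / ((n : ℝ) - 2)) * (T i j k * kd j k * (∑ s, Ric i s * df s)) := by
    intro i j k
    rw [sq]
    nth_rewrite 2 [hT i j k]
    ring
  -- summed expansion
  have hA : (∑ i : Fin n, ∑ j : Fin n, ∑ k : Fin n, (T i j k) ^ 2)
      = (((n : ℝ) - 1) / ((n : ℝ) - 2)) * (∑ i, ∑ j, ∑ k, T i j k * Ric i k * df j)
        - (((n : ℝ) - 1) / ((n : ℝ) - 2)) * (∑ i, ∑ j, ∑ k, T i j k * Ric j k * df i)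
        - (R / ((n : ℝ) - 2)) * (∑ i, ∑ j, ∑ k, T i j k * kd i k * df j)
        + (R / ((n : ℝ) - 2)) * (∑ i, ∑ j, ∑ k, T i j k * kd j k * df i)
        + (1 / ((n : ℝ) - 2)) * (∑ i, ∑ j, ∑ k, T i j k * kd i k * (∑ s, Ric j s * df s))
        - (1 / ((n : ℝ) - 2)) * (∑ i, ∑ j, ∑ k, T i j k * kd j k * (∑ s, Ric i s * df s)) := by
    rw [show (∑ i : Fin n, ∑ j : Fin n, ∑ k : Fin n, (T i j k) ^ 2)
        = ∑ i : Fin n, ∑ j : Fin n, ∑ k : Fin n,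
          ((((n : ℝ) - 1) / ((n : ℝ) - 2)) * (T i j k * Ric i k * df j)
          - (((n : ℝ) - 1) / ((n : ℝ) - 2)) * (T i j k * Ric j k * df i)
          - (R / ((n : ℝ) - 2)) * (T i j k * kd i k * df j)
          + (R / ((n : ℝ) - 2)) * (T i j k * kd j k * df i)
          + (1 / ((n : ℝ) - 2)) * (T i j k * kd i k * (∑ s, Ric j s * df s))
          - (1 / ((n : ℝ) - 2)) * (T i j k * kd j k * (∑ s, Ric i s * df s))) from
        Finset.sum_congr rfl fun i _ => Finset.sum_congr rfl fun j _ =>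
          Finset.sum_congr rfl fun k _ => hpt i j k]
    simp only [Finset.sum_add_distrib, Finset.sum_sub_distrib, ← Finset.mul_sum]
  rw [hP1, hP2, hP1, hQ1, hQ2, hU1, hU2] at hA
  -- now hA : |T|² = -2((n-1)/(n-2)) S ; conclude
  rw [hA]
  field_simp
  ring
end
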